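/- Let E be a real inner product space, let J : E → ℝ be L-smooth with L > 0, and suppose J(x) ≤ J* for all x ∈ E. Fix T ≥ 1 and set the constant step size η = 1/(L√T). Let (Ω, 𝔽, P) be a probability space with a filtration (𝔽_t)_{t≥0}, let θ_0 ∈ E be deterministic, and let (ĝ_t)_{t=0}^{T−1} be square-integrable E-valued random vectors such that, with θ_{t+1} = θ_t + η·ĝ_t, each θ_t is 𝔽_t-measurable, E[ĝ_t | 𝔽_t] = ∇J(θ_t), and E[‖ĝ_t − ∇J(θ_t)‖² | 𝔽_t] ≤ σ² almost surely for all 0 ≤ t < T. Then, with Δ = J* − J(θ_0), the averaged expected squared gradient norm satisfies (1/T)·∑_{t=0}^{T−1} E[‖∇J(θ_t)‖²] ≤ 2LΔ/√T + σ²/√T. -/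

import Mathlib

/-!
Along the segment from `x` to `x + v`, Lipschitz continuity of `∇J` gives the quadratic
lower bound `J (x + v) ≥ J x + ⟪∇J x, v⟫ - L/2 ‖v‖²`. Applied to one SGD step and integrated,
unbiasedness (a pull-out property of the conditional expectation) turns `𝔼⟪∇J θ, ĝ⟫` into
`𝔼‖∇J θ‖²`, and `𝔼‖ĝ‖² = 𝔼‖∇J θ‖² + 𝔼‖ĝ - ∇J θ‖² ≤ 𝔼‖∇J θ‖² + σ²`; so each step raises `𝔼 J`
by at least `(η - Lη²/2) 𝔼‖∇J θ_t‖² - Lη²σ²/2`. Telescoping over `T` steps and bounding the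
final value by `J*` gives the claim once `η = 1/(L√T)`, for which `η - Lη²/2 ≥ η/2`.
-/

open MeasureTheory ProbabilityTheory
open scoped RealInnerProductSpace

section Lp

variable {Ω : Type*} {mΩ : MeasurableSpace Ω} {μ : Measure Ω}

theorem LipschitzWith.comp_memLp_of_isFiniteMeasure [IsFiniteMeasure μ] {F G : Type*}
    [NormedAddCommGroup F] [NormedAddCommGroup G] {K : NNReal} {φ : F → G} {p : ENNReal}
    (hφ : LipschitzWith K φ) {X : Ω → F} (hX : MemLp X p μ) : MemLp (fun ω => φ (X ω)) p μ := by
  have h0 := (hφ.sub (LipschitzWith.const (φ 0))).comp_memLp (by simp) hX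
  convert h0.add (memLp_const (φ 0)) using 1
  funext ω
  simp

theorem MeasureTheory.MemLp.integrable_inner {E : Type*} [NormedAddCommGroup E]
    [InnerProductSpace ℝ E] {f g : Ω → E} (hf : MemLp f 2 μ) (hg : MemLp g 2 μ) :
    Integrable (fun ω => ⟪f ω, g ω⟫) μ :=
  (L2.integrable_inner (𝕜 := ℝ) (hf.toLp f) (hg.toLp g)).congr <| by
    filter_upwards [hf.coeFn_toLp, hg.coeFn_toLp] with ω hfω hgω
    rw [hfω, hgω]

theorem MeasureTheory.MemLp.integrable_norm_sq {F : Type*} [NormedAddCommGroup F] {f : Ω → F}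
    (hf : MemLp f 2 μ) : Integrable (fun ω => ‖f ω‖ ^ 2) μ :=
  (memLp_two_iff_integrable_sq_norm hf.1).mp hf

end Lp

section Smooth

variable {E : Type*} [NormedAddCommGroup E] [InnerProductSpace ℝ E] [CompleteSpace E]
  {J : E → ℝ} {gradJ : E → E} {L : ℝ}
  {Ω : Type*} {mΩ : MeasurableSpace Ω} {μ : Measure Ω} [IsFiniteMeasure μ]

theorem abs_sub_sub_inner_le_of_lipschitz_gradient (hdiff : ∀ x, HasGradientAt J (gradJ x) x)
    (hlip : ∀ x y, ‖gradJ x - gradJ y‖ ≤ L * ‖x - y‖) (x v : E) :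
    |J (x + v) - J x - ⟪gradJ x, v⟫| ≤ L / 2 * ‖v‖ ^ 2 := by
  set f : ℝ → ℝ := fun t => J (x + t • v) - J x - t * ⟪gradJ x, v⟫
  set f' : ℝ → ℝ := fun t => ⟪gradJ (x + t • v) - gradJ x, v⟫
  have hf : ∀ t, HasDerivAt f (f' t) t := by
    intro t
    have hline : HasDerivAt (fun s : ℝ => x + s • v) v t := by
      simpa using ((hasDerivAt_id t).smul_const v).const_add x
    have hJ := (hdiff (x + t • v)).hasFDerivAt.comp_hasDerivAt t hline
    have := (hJ.sub_const (J x)).sub ((hasDerivAt_id t).mul_const ⟪gradJ x, v⟫)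
    exact this.congr_deriv (by simp [f', inner_sub_left])
  have hf' : ∀ t ∈ Set.Ici (0 : ℝ), ‖f' t‖ ≤ L * ‖v‖ ^ 2 * t := by
    intro t ht
    calc ‖f' t‖ ≤ ‖gradJ (x + t • v) - gradJ x‖ * ‖v‖ := norm_inner_le_norm _ _
      _ ≤ L * ‖t • v‖ * ‖v‖ := by
        gcongr
        simpa using hlip (x + t • v) x
      _ = L * ‖v‖ ^ 2 * t := by
        rw [norm_smul, Real.norm_of_nonneg (Set.mem_Ici.mp ht)]; ring
  have hB : ∀ t, HasDerivAt (fun t => L / 2 * ‖v‖ ^ 2 * t ^ 2) (L * ‖v‖ ^ 2 * t) t := fun t =>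
    ((hasDerivAt_pow 2 t).const_mul _).congr_deriv (by push_cast; ring)
  have := image_norm_le_of_norm_deriv_right_le_deriv_boundary
    (fun t _ => (hf t).continuousAt.continuousWithinAt) (fun t _ => (hf t).hasDerivWithinAt)
    (by simp [f]) hB (fun t ht => hf' t ht.1) (by simp : (1 : ℝ) ∈ Set.Icc 0 1)
  simpa [f] using this

theorem quadratic_lower_bound_of_lipschitz_gradient (hdiff : ∀ x, HasGradientAt J (gradJ x) x)
    (hlip : ∀ x y, ‖gradJ x - gradJ y‖ ≤ L * ‖x - y‖) (x v : E) :
    J x + ⟪gradJ x, v⟫ - L / 2 * ‖v‖ ^ 2 ≤ J (x + v) := by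
  have := (abs_le.mp (abs_sub_sub_inner_le_of_lipschitz_gradient hdiff hlip x v)).1
  linarith


theorem integrable_comp_of_lipschitz_gradient (hdiff : ∀ x, HasGradientAt J (gradJ x) x)
    (hlip : ∀ x y, ‖gradJ x - gradJ y‖ ≤ L * ‖x - y‖) {X : Ω → E} (hX : MemLp X 2 μ) :
    Integrable (fun ω => J (X ω)) μ := by
  have hJ : Continuous J := continuous_iff_continuousAt.mpr fun x => (hdiff x).continuousAt
  have hdom : Integrable (fun ω => |J 0| + ‖gradJ 0‖ * ‖X ω‖ + L / 2 * ‖X ω‖ ^ 2) μ :=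
    ((integrable_const _).add ((hX.integrable one_le_two).norm.const_mul _)).add
      (hX.integrable_norm_sq.const_mul _)
  refine hdom.mono' (hJ.comp_aestronglyMeasurable hX.1) (ae_of_all _ fun ω => ?_)
  have hquad := abs_sub_sub_inner_le_of_lipschitz_gradient hdiff hlip 0 (X ω)
  have hinner := abs_real_inner_le_norm (gradJ 0) (X ω)
  rw [zero_add, abs_le] at hquad
  rw [abs_le] at hinner
  rw [Real.norm_eq_abs, abs_le]
  constructor <;> linarith [le_abs_self (J 0), neg_abs_le (J 0)]

end Smooth

section CondExp

variable {Ω : Type*} {m mΩ : MeasurableSpace Ω} {μ : Measure Ω}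

theorem integral_inner_eq_integral_norm_sq_of_condExp_eq [IsFiniteMeasure μ]
    {E : Type*} [NormedAddCommGroup E] [InnerProductSpace ℝ E] [CompleteSpace E]
    (hm : m ≤ mΩ) {f g : Ω → E} (hfm : StronglyMeasurable[m] f) (hf : MemLp f 2 μ)
    (hg : MemLp g 2 μ) (hgf : μ[g | m] =ᵐ[μ] f) :
    ∫ ω, ⟪f ω, g ω⟫ ∂μ = ∫ ω, ‖f ω‖ ^ 2 ∂μ := by
  have hpull : μ[fun ω => ⟪f ω, g ω⟫ | m] =ᵐ[μ] fun ω => ⟪f ω, (μ[g | m]) ω⟫ :=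
    condExp_bilin_of_stronglyMeasurable_left (innerSL ℝ) hfm
    (hf.integrable_inner hg) (hg.integrable one_le_two)
  calc ∫ ω, ⟪f ω, g ω⟫ ∂μ = ∫ ω, (μ[fun ω => ⟪f ω, g ω⟫ | m]) ω ∂μ := (integral_condExp hm).symm
    _ = ∫ ω, ‖f ω‖ ^ 2 ∂μ := integral_congr_ae <| by
      filter_upwards [hpull, hgf] with ω hω hgfω
      rw [hω, hgfω, real_inner_self_eq_norm_sq]

theorem integral_le_of_ae_condExp_le [IsProbabilityMeasure μ] (hm : m ≤ mΩ) {h : Ω → ℝ} {c : ℝ}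
    (hc : ∀ᵐ ω ∂μ, (μ[h | m]) ω ≤ c) : ∫ ω, h ω ∂μ ≤ c := by
  rw [← integral_condExp hm]
  simpa using integral_mono_ae integrable_condExp (integrable_const c) hc

end CondExp

section Step

variable {E : Type*} [NormedAddCommGroup E] [InnerProductSpace ℝ E] [CompleteSpace E]
  {J : E → ℝ} {gradJ : E → E} {L : ℝ}
  {Ω : Type*} {m mΩ : MeasurableSpace Ω} {μ : Measure Ω} [IsProbabilityMeasure μ]

theorem integral_add_le_integral_sgd_step (hL : 0 ≤ L) (hdiff : ∀ x, HasGradientAt J (gradJ x) x)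
    (hlip : ∀ x y, ‖gradJ x - gradJ y‖ ≤ L * ‖x - y‖) (hm : m ≤ mΩ) {θ g : Ω → E} {η σ2 : ℝ}
    (hθm : StronglyMeasurable[m] θ) (hθ : MemLp θ 2 μ) (hg : MemLp g 2 μ)
    (hmean : μ[g | m] =ᵐ[μ] fun ω => gradJ (θ ω))
    (hvar : ∀ᵐ ω ∂μ, (μ[fun ω' => ‖g ω' - gradJ (θ ω')‖ ^ 2 | m]) ω ≤ σ2) :
    ∫ ω, J (θ ω) ∂μ + (η - L * η ^ 2 / 2) * ∫ ω, ‖gradJ (θ ω)‖ ^ 2 ∂μ - L * η ^ 2 / 2 * σ2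
      ≤ ∫ ω, J (θ ω + η • g ω) ∂μ := by
  set X : Ω → E := fun ω => gradJ (θ ω)
  have hgradJ : LipschitzWith L.toNNReal gradJ :=
    .of_dist_le' fun x y => by simpa only [dist_eq_norm] using hlip x y
  have hX : MemLp X 2 μ := hgradJ.comp_memLp_of_isFiniteMeasure hθ
  have hXm : StronglyMeasurable[m] X := hgradJ.continuous.comp_stronglyMeasurable hθm
  -- the quadratic lower bound for the step `η • g ω`, with `‖g ω‖²` expanded around `X ω`
  have hpt : ∀ ω, J (θ ω) + (η - L * η ^ 2) * ⟪X ω, g ω⟫ + L * η ^ 2 / 2 * ‖X ω‖ ^ 2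
      - L * η ^ 2 / 2 * ‖g ω - X ω‖ ^ 2 ≤ J (θ ω + η • g ω) := by
    intro ω
    have h := quadratic_lower_bound_of_lipschitz_gradient hdiff hlip (θ ω) (η • g ω)
    rw [real_inner_smul_right, norm_smul, mul_pow, Real.norm_eq_abs, sq_abs] at h
    have hsq := norm_sub_sq_real (g ω) (X ω)
    rw [real_inner_comm] at hsq
    linear_combination h - L * η ^ 2 / 2 * hsq
  have hJθ := integrable_comp_of_lipschitz_gradient hdiff hlip hθ
  have hJθ' := integrable_comp_of_lipschitz_gradient hdiff hlip (hθ.add (hg.const_smul η))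
  have hXg := hX.integrable_inner hg
  have hXX := hX.integrable_norm_sq
  have hgX : Integrable (fun ω => ‖g ω - X ω‖ ^ 2) μ := (hg.sub hX).integrable_norm_sq
  have hsum : Integrable (fun ω => J (θ ω) + (η - L * η ^ 2) * ⟪X ω, g ω⟫
      + L * η ^ 2 / 2 * ‖X ω‖ ^ 2) μ := (hJθ.add (hXg.const_mul _)).add (hXX.const_mul _)
  have horth := integral_inner_eq_integral_norm_sq_of_condExp_eq hm hXm hX hg hmean
  have hV : ∫ ω, ‖g ω - X ω‖ ^ 2 ∂μ ≤ σ2 := integral_le_of_ae_condExp_le hm hvar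
  have hc : 0 ≤ L * η ^ 2 / 2 := by positivity
  calc _ ≤ ∫ ω, J (θ ω) ∂μ + (η - L * η ^ 2) * ∫ ω, ⟪X ω, g ω⟫ ∂μ
        + L * η ^ 2 / 2 * ∫ ω, ‖X ω‖ ^ 2 ∂μ - L * η ^ 2 / 2 * ∫ ω, ‖g ω - X ω‖ ^ 2 ∂μ := by
        rw [horth]
        nlinarith [mul_le_mul_of_nonneg_left hV hc]
    _ = ∫ ω, (J (θ ω) + (η - L * η ^ 2) * ⟪X ω, g ω⟫ + L * η ^ 2 / 2 * ‖X ω‖ ^ 2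
        - L * η ^ 2 / 2 * ‖g ω - X ω‖ ^ 2) ∂μ := by
        rw [integral_sub hsum (hgX.const_mul _), integral_add, integral_add, integral_const_mul,
          integral_const_mul, integral_const_mul]
        exacts [hJθ, hXg.const_mul _, hJθ.add (hXg.const_mul _), hXX.const_mul _]
    _ ≤ _ := integral_mono (hsum.sub (hgX.const_mul _)) hJθ' hpt

end Step

theorem mul_sum_range_le_of_forall_add_le {a A : ℕ → ℝ} {c d : ℝ} {T : ℕ}
    (h : ∀ t < T, a t + c * A t - d ≤ a (t + 1)) :
    c * ∑ t ∈ Finset.range T, A t ≤ a T - a 0 + T * d := by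
  calc c * ∑ t ∈ Finset.range T, A t = ∑ t ∈ Finset.range T, (c * A t - d) + T * d := by
        simp [Finset.mul_sum, Finset.sum_sub_distrib]
    _ ≤ ∑ t ∈ Finset.range T, (a (t + 1) - a t) + T * d := by
        refine add_le_add_left (Finset.sum_le_sum fun t ht => ?_) _
        linarith [h t (Finset.mem_range.mp ht)]
    _ = a T - a 0 + T * d := by rw [Finset.sum_range_sub]

theorem one_div_mul_le_of_inv_sqrt_step_size {L Δ σ2 S η : ℝ} {T : ℕ} (hL : 0 < L)
    (hT : 1 ≤ T) (hη : η = 1 / (L * Real.sqrt T)) (hS : 0 ≤ S)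
    (h : (η - L * η ^ 2 / 2) * S ≤ Δ + T * (L * η ^ 2 / 2 * σ2)) :
    1 / (T : ℝ) * S ≤ 2 * L * Δ / Real.sqrt T + σ2 / Real.sqrt T := by
  have hs : 1 ≤ Real.sqrt T := Real.one_le_sqrt.mpr (by exact_mod_cast hT)
  have hT' : (T : ℝ) = Real.sqrt T ^ 2 := (Real.sq_sqrt (Nat.cast_nonneg T)).symm
  generalize Real.sqrt T = s at hs hT' hη ⊢
  rw [hT'] at h ⊢
  subst hη
  field_simp at h ⊢
  nlinarith [mul_le_mul_of_nonneg_right (by linarith : s ≤ 2 * s - 1) hS]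

/-- **Convergence bound of stochastic gradient ascent for L-smooth objectives
(averaged form).** Let `J : E → ℝ` be `L`-smooth (`L > 0`) and bounded above by `J*`,
fix `T ≥ 1` and the step size `η = 1/(L√T)`. Starting from a deterministic `θ₀`, perform
updates `θ_{t+1} = θ_t + η·ĝ_t`, where each `θ_t` is `𝔽_t`-measurable, each `ĝ_t` is
square-integrable, conditionally unbiased `E[ĝ_t | 𝔽_t] = ∇J(θ_t)`, and has conditional
variance bounded by `σ²` a.s. Then, with `Δ = J* − J(θ₀)`,
`(1/T) ∑_{t<T} E[‖∇J(θ_t)‖²] ≤ 2LΔ/√T + σ²/√T`. -/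
theorem sgd_convergence_bound_avg
    {Ω : Type*} {mΩ : MeasurableSpace Ω} {μ : Measure Ω} [IsProbabilityMeasure μ]
    (ℱ : Filtration ℕ mΩ)
    {E : Type*} [NormedAddCommGroup E] [InnerProductSpace ℝ E] [CompleteSpace E]
    (J : E → ℝ) (gradJ : E → E) (L : ℝ) (hL : 0 < L)
    (hdiff : ∀ x, HasGradientAt J (gradJ x) x)
    (hlip : ∀ x y, ‖gradJ x - gradJ y‖ ≤ L * ‖x - y‖)
    (Jstar : ℝ) (hbound : ∀ x, J x ≤ Jstar)
    (T : ℕ) (hT : 1 ≤ T)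
    (η : ℝ) (hη : η = 1 / (L * Real.sqrt T))
    (θ₀ : E) (θ : ℕ → Ω → E) (g : ℕ → Ω → E) (σ2 : ℝ)
    (hθ0 : θ 0 = fun _ => θ₀)
    (hθsucc : ∀ t ω, θ (t + 1) ω = θ t ω + η • g t ω)
    (hadapted : ∀ t, StronglyMeasurable[ℱ t] (θ t))
    (hgL2 : ∀ t, MemLp (g t) 2 μ)
    (hmean : ∀ t < T, μ[g t | ℱ t] =ᵐ[μ] fun ω => gradJ (θ t ω))
    (hvar : ∀ t < T,
      ∀ᵐ ω ∂μ, (μ[(fun ω' => ‖g t ω' - gradJ (θ t ω')‖ ^ 2) | ℱ t]) ω ≤ σ2) :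
    (1 / (T : ℝ)) * ∑ t ∈ Finset.range T, ∫ ω, ‖gradJ (θ t ω)‖ ^ 2 ∂μ
      ≤ 2 * L * (Jstar - J θ₀) / Real.sqrt T + σ2 / Real.sqrt T := by
  have hθL2 : ∀ t, MemLp (θ t) 2 μ := by
    intro t
    induction t with
    | zero => rw [hθ0]; exact memLp_const θ₀
    | succ t ih => rw [funext (hθsucc t)]; exact ih.add ((hgL2 t).const_smul η)
  have hsum := mul_sum_range_le_of_forall_add_le fun t ht => by
    simpa only [← hθsucc] using integral_add_le_integral_sgd_step (η := η) hL.le hdiff hlip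
      (ℱ.le t) (hadapted t) (hθL2 t) (hgL2 t) (hmean t ht) (hvar t ht)
  have hJT : ∫ ω, J (θ T ω) ∂μ ≤ Jstar := by
    simpa using integral_mono (integrable_comp_of_lipschitz_gradient hdiff hlip (hθL2 T))
      (integrable_const Jstar) fun ω => hbound (θ T ω)
  refine one_div_mul_le_of_inv_sqrt_step_size hL hT hη
    (Finset.sum_nonneg fun t _ => by positivity) ?_
  simp only [hθ0, integral_const, probReal_univ, one_smul] at hsum
  linarith
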